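/- arXiv:2211.01248 — 7 statements merged into one kernel-verified Lean document; each statement's English description precedes it below -/
import Mathlib

section
/- Partial Fourier sum over a power of a subspace (Claim 4.3): for every subset I ⊆ Fin ℓ, every tuple α ∈ (F^n)^ℓ, and every subspace S of F^n, ∑_{x ∈ S^ℓ} θ^I_α(x) = |S|^{|I|} · ∏_{i ∉ I} 1[α_i ∈ S] if S ≤ Span(α_i : i ∈ I)^⊥, and ∑_{x ∈ S^ℓ} θ^I_α(x) = 0 otherwise. Here S^ℓ denotes the set of tuples x ∈ (F^n)^ℓ with x_j ∈ S for every j. -/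
open Classical

/-!
The summand factors over the coordinates, so the sum over `S^ℓ` is a product of sums over `S`.
For `i ∉ I` the factor is `1[α_i ∈ S]`. For `i ∈ I`, `y ↦ ψ ⟨α_i, y⟩` is a character of `S`,
trivial exactly when `α_i ⊥ S` (a nonzero functional is onto `F`, and `ψ ≠ 1`), so by
orthogonality its sum is `|S|` or `0`.
-/

open Finset

theorem AddChar.sum_apply_linearMap {F M R : Type*} [Field F] [AddCommGroup M] [Module F M]
    [Fintype M] [CommRing R] [IsDomain R] (ψ : AddChar F R) (hψ : ψ ≠ 1) (f : M →ₗ[F] F)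
    [Decidable (f = 0)] :
    ∑ y, ψ (f y) = if f = 0 then (Fintype.card M : R) else 0 := by
  split_ifs with hf
  · simp [hf]
  · have hsurj := (f.surjective_or_eq_zero).resolve_right hf
    apply AddChar.sum_eq_zero_of_ne_one (ψ := ψ.compAddMonoidHom f.toAddMonoidHom)
    obtain ⟨c, hc⟩ := AddChar.ne_one_iff.mp hψ
    obtain ⟨y, rfl⟩ := hsurj c
    exact AddChar.ne_one_iff.mpr ⟨y, hc⟩

theorem AddChar.sum_submodule_apply_linearMap {F V R : Type*} [Field F] [AddCommGroup V]
    [Module F V] [CommRing R] [IsDomain R] (ψ : AddChar F R) (hψ : ψ ≠ 1) (f : V →ₗ[F] F)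
    (S : Submodule F V) [Fintype S] [Decidable (∀ v ∈ S, f v = 0)] :
    ∑ y : S, ψ (f y) = if ∀ v ∈ S, f v = 0 then (Fintype.card S : R) else 0 := by
  have hrestrict : f.comp S.subtype = 0 ↔ ∀ v ∈ S, f v = 0 := by
    simp [LinearMap.ext_iff]
  exact (ψ.sum_apply_linearMap hψ (f.comp S.subtype)).trans (if_congr hrestrict rfl rfl)

theorem Finset.prod_mul_prod_compl_eq_prod_ite {ι M : Type*} [Fintype ι] [DecidableEq ι]
    [CommMonoid M] (I : Finset ι) (f g : ι → M) :
    (∏ i ∈ I, f i) * ∏ i ∈ Iᶜ, g i = ∏ i, if i ∈ I then f i else g i := by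
  rw [← prod_mul_prod_compl I]
  congr 1 <;> refine prod_congr rfl fun i hi => ?_
  · exact (if_pos hi).symm
  · exact (if_neg (mem_compl.mp hi)).symm

theorem Fintype.sum_ite_forall_mem_prod {ι M R : Type*} [Fintype ι] [DecidableEq ι] [Fintype M]
    [CommSemiring R] (s : Finset M) (g : ι → M → R) :
    ∑ x : ι → M, (if ∀ j, x j ∈ s then ∏ i, g i (x i) else 0) = ∏ i, ∑ y ∈ s, g i y := by
  rw [prod_univ_sum, ← sum_filter]
  congr 1
  ext x
  simp [Fintype.mem_piFinset]

theorem partial_fourier_sum_subspace_power_general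
    (n ℓ : ℕ) (F : Type) [Field F] [Fintype F]
    (ψ : AddChar F ℂ) (hψ : ψ ≠ 1)
    (I : Finset (Fin ℓ)) (α : Fin ℓ → Fin n → F) (S : Submodule F (Fin n → F)) :
    (∑ x : Fin ℓ → Fin n → F,
        if ∀ j, x j ∈ S then
          (∏ i ∈ I, ψ (∑ k, α i k * x i k)) *
            (∏ i ∈ Iᶜ, if x i = α i then (1 : ℂ) else 0)
        else 0)
      = if ∀ v ∈ S, ∀ i ∈ I, (∑ k, α i k * v k) = 0
          then ((Fintype.card S : ℂ)) ^ I.card *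
            ∏ i ∈ Iᶜ, (if α i ∈ S then (1 : ℂ) else 0)
          else 0 := by
  set s := univ.filter (· ∈ S)
  set θ : Fin ℓ → (Fin n → F) → ℂ := fun i y =>
    if i ∈ I then ψ (∑ k, α i k * y k) else if y = α i then 1 else 0
  have hfactor (i : Fin ℓ) : ∑ y ∈ s, θ i y = if i ∈ I
      then (if ∀ v ∈ S, (∑ k, α i k * v k) = 0 then (Fintype.card S : ℂ) else 0)
      else (if α i ∈ S then 1 else 0) := by
    by_cases hi : i ∈ I
    · rw [if_pos hi, sum_subtype s (p := (· ∈ S)) (by simp [s])]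
      simp only [θ, if_pos hi]
      exact ψ.sum_submodule_apply_linearMap hψ (dotProductEquiv F (Fin n) (α i)) S
    · simp only [θ, if_neg hi, sum_ite_eq']
      simp [s]
  calc _ = ∑ x : Fin ℓ → Fin n → F, if ∀ j, x j ∈ s then ∏ i, θ i (x i) else 0 := by
        simp [s, θ, prod_mul_prod_compl_eq_prod_ite]
    _ = ∏ i, ∑ y ∈ s, θ i y := by convert Fintype.sum_ite_forall_mem_prod s θ
    _ = (∏ i ∈ I, if ∀ v ∈ S, (∑ k, α i k * v k) = 0 then (Fintype.card S : ℂ) else 0) *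
          ∏ i ∈ Iᶜ, (if α i ∈ S then (1 : ℂ) else 0) := by
        rw [prod_mul_prod_compl_eq_prod_ite]
        exact prod_congr rfl fun i _ => hfactor i
    _ = _ := by
        simp only [prod_ite_zero, prod_const, ite_mul, zero_mul]
        exact if_congr forall₂_comm rfl rfl

/-- **Partial Fourier sum over a power of a subspace (Claim 4.3).**
For every `I ⊆ Fin ℓ`, `α ∈ (F^n)^ℓ` and subspace `S ≤ F^n`,
`∑_{x ∈ S^ℓ} θ^I_α(x) = |S|^|I| ⬝ ∏_{i ∉ I} 1[α_i ∈ S]` if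
`S ≤ Span(α_i : i ∈ I)^⊥`, and `0` otherwise. -/
theorem partial_fourier_sum_subspace_power
    (n ℓ : ℕ) (hn : 1 ≤ n) (hl : 1 ≤ ℓ) (F : Type) [Field F] [Fintype F]
    (ψ : AddChar F ℂ) (hψ : ψ ≠ 1)
    (I : Finset (Fin ℓ)) (α : Fin ℓ → Fin n → F) (S : Submodule F (Fin n → F)) :
    (∑ x : Fin ℓ → Fin n → F,
        if ∀ j, x j ∈ S then
          (∏ i ∈ I, ψ (∑ k, α i k * x i k)) *
            (∏ i ∈ Iᶜ, if x i = α i then (1 : ℂ) else 0)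
        else 0)
      = if ∀ v ∈ S, ∀ i ∈ I, (∑ k, α i k * v k) = 0
          then ((Fintype.card S : ℂ)) ^ I.card *
            ∏ i ∈ Iᶜ, (if α i ∈ S then (1 : ℂ) else 0)
          else 0 :=
  partial_fourier_sum_subspace_power_general n ℓ F ψ hψ I α S
end

section
/- Fourier constraint rewriting: let p be a function from the subspaces of F^n to ℝ and define a : (F^n)^ℓ → ℝ by a(x) := ∑_{T : Span(x) ≤ T} p(T). Then for every α ∈ (F^n)^ℓ, ∑_{x ∈ (F^n)^ℓ} a(x)·χ_α(x) = ∑_{S : S ≤ Span(α)^⊥} |S|^ℓ · p(S) (an equality of complex numbers whose right-hand side is real). -/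
/-!
Expanding `a` and exchanging the sums gives `∑_T p(T) ∑_{x ∈ T^ℓ} χ_α(x)`, since
`Span(x) ≤ T` means that every `x_j` lies in `T`. The inner sum factors as
`∏_j ∑_{v ∈ T} ψ(⟨α_j, v⟩)`, and each factor is a sum of the additive character `ψ ∘ ⟨α_j, ·⟩`
of `T`: it is `|T|` if `⟨α_j, ·⟩` vanishes on `T`, and otherwise `0`, because a nonzero
linear form is surjective and `ψ` is nontrivial.
-/

open Classical

theorem AddChar.map_sum_eq_prod {A M ι : Type*} [AddCommMonoid A] [CommMonoid M]
    (ψ : AddChar A M) (s : Finset ι) (f : ι → A) :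
    ψ (∑ i ∈ s, f i) = ∏ i ∈ s, ψ (f i) := by
  induction s using Finset.cons_induction with
  | empty => simp
  | cons i s _ ih => rw [Finset.sum_cons, Finset.prod_cons, AddChar.map_add_eq_mul, ih]

theorem AddChar.sum_comp_linearMap {F V R : Type*} [Field F] [AddCommGroup V] [Module F V]
    [Fintype V] [CommRing R] [IsDomain R] {ψ : AddChar F R} (hψ : ψ ≠ 1) (f : V →ₗ[F] F) :
    ∑ v, ψ (f v) = if f = 0 then (Fintype.card V : R) else 0 := by
  split_ifs with hf
  · simp [hf]
  obtain ⟨a, ha⟩ := AddChar.ne_one_iff.1 hψ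
  obtain ⟨v, rfl⟩ := LinearMap.surjective hf a
  exact AddChar.sum_eq_zero_of_ne_one (ψ := ψ.compAddMonoidHom f.toAddMonoidHom)
    (AddChar.ne_one_iff.2 ⟨v, ha⟩)

theorem Submodule.sum_ite_span_range_le {R V M ι : Type*} [Semiring R] [AddCommMonoid V]
    [Module R V] [Fintype V] [AddCommMonoid M] [Fintype ι] [DecidableEq ι]
    (T : Submodule R V) (g : (ι → V) → M) :
    ∑ x : ι → V, (if span R (Set.range x) ≤ T then g x else 0)
      = ∑ y : ι → T, g (fun j ↦ y j) := by
  rw [← Finset.sum_filter, Finset.sum_subtype (p := fun x : ι → V ↦ ∀ j, x j ∈ T) _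
    (by simp [span_le, Set.range_subset_iff])]
  exact Fintype.sum_equiv Equiv.subtypePiEquivPi _ _ fun x ↦ rfl

section DotProduct

variable {F R n : Type*} [Field F] [Fintype F] [CommRing R] [IsDomain R] [Fintype n]
  [DecidableEq n] {ψ : AddChar F R}

theorem Submodule.sum_addChar_dotProduct (hψ : ψ ≠ 1) (T : Submodule F (n → F)) (β : n → F) :
    ∑ v : T, ψ (β ⬝ᵥ v) = if ∀ v ∈ T, β ⬝ᵥ v = 0 then (Fintype.card T : R) else 0 := by
  simpa [LinearMap.ext_iff] using
    AddChar.sum_comp_linearMap hψ ((dotProductBilin F F β).domRestrict T)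

theorem Submodule.sum_pi_addChar_sum_dotProduct {ι : Type*} [Fintype ι] [DecidableEq ι] (hψ : ψ ≠ 1)
    (T : Submodule F (n → F)) (α : ι → n → F) :
    ∑ y : ι → T, ψ (∑ j, α j ⬝ᵥ y j)
      = if ∀ v ∈ T, ∀ j, α j ⬝ᵥ v = 0 then (Fintype.card T : R) ^ Fintype.card ι else 0 := by
  simp_rw [AddChar.map_sum_eq_prod, ← Fintype.prod_sum (fun j (v : T) ↦ ψ (α j ⬝ᵥ v)),
    Submodule.sum_addChar_dotProduct hψ, Fintype.prod_ite_zero, Finset.prod_const,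
    Finset.card_univ]
  simp only [forall_comm (α := ι)]

end DotProduct

theorem fourier_constraint_rewriting_general
    (n ℓ : ℕ) (F : Type) [Field F] [Fintype F]
    (ψ : AddChar F ℂ) (hψ : ψ ≠ 1)
    (p : Submodule F (Fin n → F) → ℝ)
    (a : (Fin ℓ → Fin n → F) → ℝ)
    (ha : ∀ x : Fin ℓ → Fin n → F,
      a x = ∑ T : Submodule F (Fin n → F),
        if Submodule.span F (Set.range x) ≤ T then p T else 0)
    (α : Fin ℓ → Fin n → F) :
    (∑ x : Fin ℓ → Fin n → F, (a x : ℂ) * ψ (∑ j, ∑ i, α j i * x j i))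
      = ∑ S : Submodule F (Fin n → F),
          if ∀ v ∈ S, ∀ j, (∑ i, α j i * v i) = 0
            then ((Fintype.card S : ℂ)) ^ ℓ * (p S : ℂ) else 0 := by
  simp only [← dotProduct.eq_1]
  calc ∑ x : Fin ℓ → Fin n → F, (a x : ℂ) * ψ (∑ j, α j ⬝ᵥ x j)
      = ∑ T : Submodule F (Fin n → F), (p T : ℂ) * ∑ x : Fin ℓ → Fin n → F,
          if Submodule.span F (Set.range x) ≤ T then ψ (∑ j, α j ⬝ᵥ x j) else 0 := by
        simp_rw [ha, Complex.ofReal_sum, Finset.sum_mul, Finset.mul_sum, apply_ite Complex.ofReal,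
          ite_mul, mul_ite, Complex.ofReal_zero, zero_mul, mul_zero]
        exact Finset.sum_comm
    _ = ∑ T : Submodule F (Fin n → F), (p T : ℂ) * ∑ y : Fin ℓ → T, ψ (∑ j, α j ⬝ᵥ y j) := by
        simp only [Submodule.sum_ite_span_range_le]
    _ = _ := by
        simp_rw [Submodule.sum_pi_addChar_sum_dotProduct hψ, Fintype.card_fin, mul_ite, mul_zero,
          mul_comm]

/-- **Fourier constraint rewriting.**
If `a x = ∑_{T ≥ Span(x)} p T`, then for every `α ∈ (F^n)^ℓ`,
`∑_x a(x) χ_α(x) = ∑_{S ≤ Span(α)^⊥} |S|^ℓ p(S)`. -/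
theorem fourier_constraint_rewriting
    (n ℓ : ℕ) (hn : 1 ≤ n) (hl : 1 ≤ ℓ) (F : Type) [Field F] [Fintype F]
    (ψ : AddChar F ℂ) (hψ : ψ ≠ 1)
    (p : Submodule F (Fin n → F) → ℝ)
    (a : (Fin ℓ → Fin n → F) → ℝ)
    (ha : ∀ x : Fin ℓ → Fin n → F,
      a x = ∑ T : Submodule F (Fin n → F),
        if Submodule.span F (Set.range x) ≤ T then p T else 0)
    (α : Fin ℓ → Fin n → F) :
    (∑ x : Fin ℓ → Fin n → F, (a x : ℂ) * ψ (∑ j, ∑ i, α j i * x j i))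
      = ∑ S : Submodule F (Fin n → F),
          if ∀ v ∈ S, ∀ j, (∑ i, α j i * v i) = 0
            then ((Fintype.card S : ℂ)) ^ ℓ * (p S : ℂ) else 0 :=
  fourier_constraint_rewriting_general n ℓ F ψ hψ p a ha α
end

section
/- Equivalence of the Krawtchouk LP and its pseudoprobability formulation (Lemma 3.2): assume ℓ ≥ n. Let p be a function from the subspaces of F^n to ℝ and define a : (F^n)^ℓ → ℝ by a(x) := ∑_{T : Span(x) ≤ T} p(T). Then a is feasible for the unsymmetrized Krawtchouk LP at level ℓ if and only if p is feasible for the distance-constrained pseudoprobability program at level ℓ; moreover ∑_{x ∈ (F^n)^ℓ} a(x) = ∑_S |S|^ℓ · p(S). -/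
open Classical

noncomputable section

/-- `χ_α(x) := ψ(∑_j ⟨α_j, x_j⟩)`. -/
def chi {n ℓ : ℕ} {F : Type} [Field F] [Fintype F] (ψ : AddChar F ℂ)
    (α x : Fin ℓ → Fin n → F) : ℂ :=
  ψ (∑ j, ∑ i, α j i * x j i)

/-- Feasibility for the unsymmetrized Krawtchouk LP at level `ℓ`:
normalization, distance constraints, Fourier constraints (each Fourier
coefficient is a nonnegative real), and nonnegativity. -/
def KrawFeasible (n ℓ d : ℕ) (F : Type) [Field F] [Fintype F]
    (ψ : AddChar F ℂ) (a : (Fin ℓ → Fin n → F) → ℝ) : Prop :=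
  a 0 = 1 ∧
  (∀ x : Fin ℓ → Fin n → F,
      (∃ w ∈ Submodule.span F (Set.range x), w ≠ 0 ∧ hammingNorm w ≤ d - 1) → a x = 0) ∧
  (∀ α : Fin ℓ → Fin n → F, ∃ c : ℝ, 0 ≤ c ∧
      (∑ x : Fin ℓ → Fin n → F, (a x : ℂ) * chi ψ α x) = (c : ℂ)) ∧
  (∀ x : Fin ℓ → Fin n → F, 0 ≤ a x)

/-- Feasibility for the distance-constrained pseudoprobability program at level `ℓ`:
normalization, distance constraints, Fourier constraints, and nonnegativity
constraints. -/
def PseudoFeasibleDist (n ℓ d : ℕ) (F : Type) [Field F] [Fintype F]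
    (p : Submodule F (Fin n → F) → ℝ) : Prop :=
  (∑ S : Submodule F (Fin n → F), p S) = 1 ∧
  (∀ S : Submodule F (Fin n → F), (∃ w ∈ S, w ≠ 0 ∧ hammingNorm w ≤ d - 1) → p S = 0) ∧
  (∀ U : Submodule F (Fin n → F),
      0 ≤ ∑ S : Submodule F (Fin n → F),
        if S ≤ U then (Fintype.card S : ℝ) ^ ℓ * p S else 0) ∧
  (∀ U : Submodule F (Fin n → F),
      0 ≤ ∑ S : Submodule F (Fin n → F), if U ≤ S then p S else 0)

/-!
Swapping the sums in the Fourier coefficient of `a` at `α` leaves, for each subspace `T`, a sum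
over `x ∈ T^ℓ` of `ψ(∑ⱼ ⟨αⱼ, xⱼ⟩)`. This is a sum of an additive character of `T^ℓ`, so it equals
`|T|^ℓ` when every `αⱼ` is orthogonal to `T` and vanishes otherwise; hence
`∑ₓ a(x) χ_α(x) = ∑_{T ≤ Span(α)^⊥} |T|^ℓ p(T)`, which at `α = 0` is the objective identity.
Since `ℓ ≥ n`, every subspace is some `Span(x)` and, as `U^⊥⊥ = U`, some `Span(α)^⊥`; this
matches the Fourier and nonnegativity constraints of the two programs. The distance constraints
on `a` say that the upper sums `∑_{T ≥ S} p(T)` vanish on the upward closed family of subspaces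
containing a light nonzero word, and downward induction over that family makes `p` vanish there.
-/

open Finset

theorem AddChar.sum_linearMap_eq_ite {F M R : Type*} [Field F] [AddCommGroup M] [Module F M]
    [Fintype M] [CommRing R] [IsDomain R] {ψ : AddChar F R} (hψ : ψ ≠ 1) (f : M →ₗ[F] F) :
    ∑ m, ψ (f m) = if f = 0 then (Fintype.card M : R) else 0 := by
  have trivial_iff : ψ.compAddMonoidHom f.toAddMonoidHom = 0 ↔ f = 0 := by
    refine ⟨fun h => by_contra fun hf => hψ ?_, fun hf => by ext; simp [hf]⟩
    exact AddChar.compAddMonoidHom_injective_left _ (LinearMap.surjective_of_ne_zero hf) h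
  simpa only [trivial_iff, AddChar.compAddMonoidHom_apply, LinearMap.toAddMonoidHom_coe] using
    (ψ.compAddMonoidHom f.toAddMonoidHom).sum_eq_ite

theorem IsUpperSet.eq_zero_of_forall_sum_ge_eq_zero {α M : Type*} [PartialOrder α] [Fintype α]
    [AddCommMonoid M] {P : Set α} (hP : IsUpperSet P) {f : α → M}
    (h : ∀ s ∈ P, ∑ t, (if s ≤ t then f t else 0) = 0) {s : α} (hs : s ∈ P) : f s = 0 := by
  induction s using WellFoundedGT.induction with
  | _ s ih =>
    have only_s : ∀ t, (if s ≤ t then f t else 0) = if s = t then f s else 0 := by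
      intro t
      by_cases hst : s = t
      · simp [hst]
      · by_cases hle : s ≤ t
        · simp [hst, hle, ih t (lt_of_le_of_ne hle hst) (hP hle hs)]
        · simp [hst, hle]
    simpa [only_s] using h s hs

theorem span_range_surjective {K V : Type*} [DivisionRing K] [AddCommGroup V] [Module K V]
    [FiniteDimensional K V] {ℓ : ℕ} (hℓ : Module.finrank K V ≤ ℓ) :
    Function.Surjective fun x : Fin ℓ → V => Submodule.span K (Set.range x) := by
  intro U
  let b := Module.finBasis K U
  have hU : Module.finrank K U ≤ ℓ := (Submodule.finrank_le U).trans hℓ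
  refine ⟨fun j => if hj : (j : ℕ) < Module.finrank K U then b ⟨j, hj⟩ else 0, le_antisymm ?_ ?_⟩
  · rw [Submodule.span_le, Set.range_subset_iff]
    intro j
    split_ifs <;> simp
  · have hb : Submodule.span K (Set.range (U.subtype ∘ b)) = U := by
      rw [Set.range_comp, Submodule.span_image, b.span_eq, Submodule.map_subtype_top]
    refine hb.symm.le.trans (Submodule.span_mono ?_)
    rintro _ ⟨i, rfl⟩
    exact ⟨Fin.castLE hU i, by simp⟩

section DotProduct

variable {ι F : Type*} [Fintype ι] [Field F]

variable (ι F) in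
abbrev dotProductForm : LinearMap.BilinForm F (ι → F) := dotProductBilin F F

theorem dotProductForm_isRefl : (dotProductForm ι F).IsRefl := fun u v h => by
  simpa [dotProduct_comm] using h

theorem dotProductForm_nondegenerate : (dotProductForm ι F).Nondegenerate :=
  (LinearMap.IsRefl.nondegenerate_iff_separatingLeft (B := dotProductForm ι F)
    dotProductForm_isRefl).2 fun u h => dotProduct_eq_zero u h

theorem le_orthogonal_span_range_iff {κ : Type*} (α : κ → ι → F) (T : Submodule F (ι → F)) :
    T ≤ (dotProductForm ι F).orthogonal (Submodule.span F (Set.range α)) ↔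
      ∀ j, ∀ u ∈ T, α j ⬝ᵥ u = 0 := by
  refine ⟨fun h j u hu => h hu _ (Submodule.subset_span ⟨j, rfl⟩), fun h u hu v hv => ?_⟩
  exact Submodule.span_le (p := LinearMap.ker ((dotProductForm ι F).flip u)) |>.2
    (Set.range_subset_iff.2 fun j => h j u hu) hv

theorem orthogonal_span_range_surjective {ℓ : ℕ} (hℓ : Fintype.card ι ≤ ℓ) :
    Function.Surjective fun α : Fin ℓ → ι → F =>
      (dotProductForm ι F).orthogonal (Submodule.span F (Set.range α)) := by
  intro U
  obtain ⟨α, hα⟩ := span_range_surjective (by simpa using hℓ) ((dotProductForm ι F).orthogonal U)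
  refine ⟨α, ?_⟩
  simp only [hα, LinearMap.BilinForm.orthogonal_orthogonal (B := dotProductForm ι F)
    dotProductForm_nondegenerate dotProductForm_isRefl]

variable {κ R : Type*} [Fintype κ] [DecidableEq κ] [DecidableEq ι] [Fintype F] [CommRing R]
  [IsDomain R] {ψ : AddChar F R}

theorem sum_ite_forall_mem_addChar (hψ : ψ ≠ 1) (α : κ → ι → F) (T : Submodule F (ι → F)) :
    ∑ x : κ → ι → F, (if ∀ j, x j ∈ T then ψ (∑ j, α j ⬝ᵥ x j) else 0)
      = if T ≤ (dotProductForm ι F).orthogonal (Submodule.span F (Set.range α))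
        then (Fintype.card T : R) ^ Fintype.card κ else 0 := by
  let L : (κ → T) →ₗ[F] F :=
    LinearMap.lsum F (fun _ => T) F fun j => (dotProductForm ι F (α j)).comp T.subtype
  have hL : ∀ y, L y = ∑ j, α j ⬝ᵥ y j := by simp [L]
  have hL0 : L = 0 ↔ T ≤ (dotProductForm ι F).orthogonal (Submodule.span F (Set.range α)) := by
    rw [le_orthogonal_span_range_iff, LinearEquiv.map_eq_zero_iff, funext_iff]
    simp [LinearMap.ext_iff]
  calc _ = ∑ y : κ → T, ψ (L y) := by
        refine (Fintype.sum_of_injective (fun y j => (y j : ι → F)) ?_ _ _ ?_ fun y => ?_).symm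
        · exact fun y y' h => funext fun j => Subtype.ext (congrFun h j)
        · exact fun x hx => if_neg fun h => hx ⟨fun j => ⟨x j, h j⟩, rfl⟩
        · simp [hL]
    _ = _ := by simp only [AddChar.sum_linearMap_eq_ite hψ, hL0, Fintype.card_fun, Nat.cast_pow]

theorem sum_mul_addChar_eq_sum_le_orthogonal (hψ : ψ ≠ 1) (p : Submodule F (ι → F) → R) (α : κ → ι → F) :
    ∑ x : κ → ι → F,
        (∑ T, if Submodule.span F (Set.range x) ≤ T then p T else 0) * ψ (∑ j, α j ⬝ᵥ x j)
      = ∑ T, if T ≤ (dotProductForm ι F).orthogonal (Submodule.span F (Set.range α))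
        then (Fintype.card T : R) ^ Fintype.card κ * p T else 0 := by
  simp_rw [sum_mul, ite_mul, zero_mul]
  rw [sum_comm]
  refine sum_congr rfl fun T _ => ?_
  simp_rw [Submodule.span_le, Set.range_subset_iff, SetLike.mem_coe, ← mul_ite_zero, ← mul_sum,
    sum_ite_forall_mem_addChar hψ, mul_ite_zero, mul_comm]

end DotProduct

section KrawtchoukLP

variable {n ℓ : ℕ} {F : Type} [Field F] [Fintype F] {p : Submodule F (Fin n → F) → ℝ}
  {a : (Fin ℓ → Fin n → F) → ℝ}
  (ha : ∀ x, a x = ∑ T, if Submodule.span F (Set.range x) ≤ T then p T else 0)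
include ha

theorem kraw_zero_eq_sum : a 0 = ∑ S, p S := by
  simp [ha, Submodule.span_le, Set.range_subset_iff]

theorem kraw_fourier_eq {ψ : AddChar F ℂ} (hψ : ψ ≠ 1) (α : Fin ℓ → Fin n → F) :
    ∑ x, (a x : ℂ) * chi ψ α x
      = ((∑ T, if T ≤ (dotProductForm (Fin n) F).orthogonal (Submodule.span F (Set.range α))
          then (Fintype.card T : ℝ) ^ ℓ * p T else 0 : ℝ) : ℂ) := by
  calc ∑ x, (a x : ℂ) * chi ψ α x
      = ∑ x, (∑ T, if Submodule.span F (Set.range x) ≤ T then (p T : ℂ) else 0)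
          * ψ (∑ j, α j ⬝ᵥ x j) := by
        refine sum_congr rfl fun x _ => ?_
        simp only [ha x, Complex.ofReal_sum, apply_ite Complex.ofReal, Complex.ofReal_zero]
        rfl
    _ = _ := by
        simp only [sum_mul_addChar_eq_sum_le_orthogonal hψ, Fintype.card_fin, Complex.ofReal_sum,
          apply_ite Complex.ofReal, Complex.ofReal_zero, Complex.ofReal_mul, Complex.ofReal_pow,
          Complex.ofReal_natCast]

theorem sum_kraw_eq {ψ : AddChar F ℂ} (hψ : ψ ≠ 1) :
    ∑ x, a x = ∑ S : Submodule F (Fin n → F), (Fintype.card S : ℝ) ^ ℓ * p S := by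
  have h := kraw_fourier_eq ha hψ 0
  simp only [chi, Pi.zero_apply, zero_mul, sum_const_zero, AddChar.map_zero_eq_one, mul_one,
    le_orthogonal_span_range_iff, zero_dotProduct, implies_true, ↓reduceIte] at h
  exact_mod_cast h

variable (hnl : n ≤ ℓ)
include hnl

theorem kraw_forall_eq_zero_iff {P : Set (Submodule F (Fin n → F))} (hP : IsUpperSet P) :
    (∀ x, Submodule.span F (Set.range x) ∈ P → a x = 0) ↔ ∀ S ∈ P, p S = 0 := by
  refine ⟨fun h S => hP.eq_zero_of_forall_sum_ge_eq_zero fun U hU => ?_, fun h x hx => ?_⟩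
  · obtain ⟨x, rfl⟩ := span_range_surjective (by simpa using hnl) U
    rw [← ha]
    exact h x hU
  · rw [ha]
    exact sum_eq_zero fun T _ => by split_ifs with hT; exacts [h T (hP hT hx), rfl]

theorem kraw_fourier_nonneg_iff {ψ : AddChar F ℂ} (hψ : ψ ≠ 1) :
    (∀ α, ∃ c : ℝ, 0 ≤ c ∧ ∑ x, (a x : ℂ) * chi ψ α x = c) ↔
      ∀ U, 0 ≤ ∑ S : Submodule F (Fin n → F),
        if S ≤ U then (Fintype.card S : ℝ) ^ ℓ * p S else 0 := by
  simp only [kraw_fourier_eq ha hψ, Complex.ofReal_inj, ↓existsAndEq, and_true]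
  refine ⟨fun h U => ?_, fun h α => h _⟩
  obtain ⟨α, rfl⟩ :=
    orthogonal_span_range_surjective (ι := Fin n) (F := F) (by simpa using hnl) U
  exact h α

theorem kraw_nonneg_iff :
    (∀ x, 0 ≤ a x) ↔ ∀ U, 0 ≤ ∑ S : Submodule F (Fin n → F), if U ≤ S then p S else 0 := by
  simp only [ha]
  refine ⟨fun h U => ?_, fun h x => h _⟩
  obtain ⟨x, rfl⟩ := span_range_surjective (K := F) (V := Fin n → F) (by simpa using hnl) U
  exact h x

end KrawtchoukLP

theorem kraw_pseudoprob_equivalence_general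
    (n ℓ d : ℕ) (hnl : n ≤ ℓ)
    (F : Type) [Field F] [Fintype F]
    (ψ : AddChar F ℂ) (hψ : ψ ≠ 1)
    (p : Submodule F (Fin n → F) → ℝ)
    (a : (Fin ℓ → Fin n → F) → ℝ)
    (ha : ∀ x : Fin ℓ → Fin n → F,
      a x = ∑ T : Submodule F (Fin n → F),
        if Submodule.span F (Set.range x) ≤ T then p T else 0) :
    (KrawFeasible n ℓ d F ψ a ↔ PseudoFeasibleDist n ℓ d F p) ∧
    (∑ x : Fin ℓ → Fin n → F, a x)
      = ∑ S : Submodule F (Fin n → F), (Fintype.card S : ℝ) ^ ℓ * p S := by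
  have low_weight_upper : IsUpperSet {S : Submodule F (Fin n → F) |
      ∃ w ∈ S, w ≠ 0 ∧ hammingNorm w ≤ d - 1} :=
    fun _ _ hST ⟨w, hw, hw'⟩ => ⟨w, hST hw, hw'⟩
  refine ⟨?_, sum_kraw_eq ha hψ⟩
  unfold KrawFeasible PseudoFeasibleDist
  rw [kraw_zero_eq_sum ha]
  exact and_congr Iff.rfl <| and_congr (kraw_forall_eq_zero_iff ha hnl low_weight_upper) <|
    and_congr (kraw_fourier_nonneg_iff ha hnl hψ) (kraw_nonneg_iff ha hnl)

/-- **Equivalence of the Krawtchouk LP and its pseudoprobability formulation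
(Lemma 3.2).** For `ℓ ≥ n`, with `a x := ∑_{T ≥ Span x} p T`, `a` is feasible for
the unsymmetrized Krawtchouk LP iff `p` is feasible for the distance-constrained
pseudoprobability program, and the objectives agree:
`∑_x a x = ∑_S |S|^ℓ p S`. -/
theorem kraw_pseudoprob_equivalence
    (n ℓ d : ℕ) (hn : 1 ≤ n) (hd : 1 ≤ d) (hdn : d ≤ n) (hnl : n ≤ ℓ)
    (F : Type) [Field F] [Fintype F]
    (ψ : AddChar F ℂ) (hψ : ψ ≠ 1)
    (p : Submodule F (Fin n → F) → ℝ)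
    (a : (Fin ℓ → Fin n → F) → ℝ)
    (ha : ∀ x : Fin ℓ → Fin n → F,
      a x = ∑ T : Submodule F (Fin n → F),
        if Submodule.span F (Set.range x) ≤ T then p T else 0) :
    (KrawFeasible n ℓ d F ψ a ↔ PseudoFeasibleDist n ℓ d F p) ∧
    (∑ x : Fin ℓ → Fin n → F, a x)
      = ∑ S : Submodule F (Fin n → F), (Fintype.card S : ℝ) ^ ℓ * p S :=
  kraw_pseudoprob_equivalence_general n ℓ d hnl F ψ hψ p a ha
end
end

section
/- Optimum solutions are integral (Theorem 3.6, structure of optima): assume ℓ ≥ n. If p is feasible for the dimension-constrained pseudoprobability program at level ℓ and maximizes the objective ∑_S |S|^ℓ · p(S) among all feasible solutions, then p(S) ≥ 0 for every subspace S, ∑_S p(S) = 1, and p(S) = 0 for every subspace S with dim S ≠ k₀; in particular p is a probability distribution supported on subspaces of dimension exactly k₀. -/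
open Classical

noncomputable section

/-- A subspace `C ≤ F^n` has minimum distance at least `d` if every nonzero
codeword has Hamming weight at least `d`. -/
def MinDistGe (n d : ℕ) (F : Type) [Field F] [Fintype F]
    (C : Submodule F (Fin n → F)) : Prop :=
  ∀ w ∈ C, w ≠ 0 → d ≤ hammingNorm w

/-- `k₀`: the maximum dimension of a subspace of `F^n` of minimum distance at
least `d`. -/
def kzero (n d : ℕ) (F : Type) [Field F] [Fintype F] : ℕ :=
  sSup {k : ℕ | ∃ C : Submodule F (Fin n → F), MinDistGe n d F C ∧ Module.finrank F C = k}

/-- Feasibility for the dimension-constrained pseudoprobability program at level `ℓ`: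
normalization, dimension constraints, Fourier constraints, and nonnegativity
constraints. -/
def PseudoFeasibleDim (n ℓ d : ℕ) (F : Type) [Field F] [Fintype F]
    (p : Submodule F (Fin n → F) → ℝ) : Prop :=
  (∑ S : Submodule F (Fin n → F), p S) = 1 ∧
  (∀ S : Submodule F (Fin n → F), kzero n d F < Module.finrank F S → p S = 0) ∧
  (∀ U : Submodule F (Fin n → F),
      0 ≤ ∑ S : Submodule F (Fin n → F),
        if S ≤ U then (Fintype.card S : ℝ) ^ ℓ * p S else 0) ∧
  (∀ U : Submodule F (Fin n → F),
      0 ≤ ∑ S : Submodule F (Fin n → F), if U ≤ S then p S else 0)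

/-!
Writing `Q = q^ℓ`, the objective is `∑_S Q^(dim S) p(S)`, and the point mass on a code of
dimension `k₀` is feasible with value `Q^k₀`. Conversely there are dual multipliers `λ_U ≥ 0`,
positive for `dim U < k₀`, with `∑_{U ⊇ S} λ_U = Q^(k₀ - dim S) - 1`; pairing them with the
Fourier constraints gives `Q^k₀ - ∑_S Q^(dim S) p(S) = ∑_U λ_U ∑_{S ≤ U} Q^(dim S) p(S) ≥ 0`.
For an optimal `p` every Fourier constraint below `k₀` is therefore tight, which forces
`p(S) = 0` for `dim S < k₀` by induction on `S`; the nonnegativity constraint at a subspace of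
dimension `k₀` then reads `p(S) ≥ 0`. The multipliers are positive because `ℓ ≥ n`: each
`X > U` contains some `U ⊔ ⟨w⟩` with `w ∉ U`, and there are fewer than `q^n ≤ Q` such `w`, so
`∑_{X > U} λ_X ≤ (Q - 1)(Q^(t-1) - 1) < Q^t - 1` where `t = k₀ - dim U`.
-/

open Finset Module

theorem Finset.sum_filter_le_eq_add {α M : Type*} [PartialOrder α] [Fintype α] [AddCommMonoid M]
    (a : α) (f : α → M) : ∑ b ∈ univ with a ≤ b, f b = f a + ∑ b ∈ univ with a < b, f b := by
  rw [← sum_insert (by simp)]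
  congr 1
  ext b
  simp [le_iff_eq_or_lt, eq_comm]

theorem eq_zero_of_sum_filter_le_eq_zero {α M : Type*} [PartialOrder α] [Fintype α]
    [AddCommMonoid M] {s : Set α} (hs : IsLowerSet s) {f : α → M}
    (h : ∀ a ∈ s, ∑ b ∈ univ with b ≤ a, f b = 0) :
    ∀ a ∈ s, f a = 0 := by
  intro a
  induction a using WellFoundedLT.induction with
  | ind a ih =>
    intro ha
    have hlt : ∑ b ∈ univ with b < a, f b = 0 :=
      sum_eq_zero fun b hb => ih b (mem_filter.1 hb).2 (hs (mem_filter.1 hb).2.le ha)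
    have hle : ∑ b ∈ univ with b ≤ a, f b = f a + ∑ b ∈ univ with b < a, f b :=
      sum_filter_le_eq_add (α := αᵒᵈ) a f
    rwa [h a ha, hlt, add_zero, eq_comm] at hle

namespace Submodule

variable {F V : Type*} [DivisionRing F] [AddCommGroup V] [Module F V] [Fintype V]

/-- The dual multipliers, defined by Möbius inversion of `U ↦ Q ^ (k₀ - dim U) - 1` over the
subspaces containing `U`. The truncated subtraction makes this target `0` once `dim U ≥ k₀`. -/
noncomputable def dualMultiplier (Q : ℝ) (k₀ : ℕ) (U : Submodule F V) : ℝ :=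
  Q ^ (k₀ - finrank F U) - 1 - ∑ X : {X : Submodule F V // U < X}, dualMultiplier Q k₀ X
termination_by Fintype.card {X : Submodule F V // U < X}
decreasing_by
  simp only [Fintype.card_subtype]
  exact card_lt_card <| (ssubset_iff_of_subset fun Y hY => by simp_all [X.2.trans]).2
    ⟨X, by simpa using X.2, by simp⟩

variable {Q : ℝ} {k₀ : ℕ}

theorem dualMultiplier_eq (U : Submodule F V) : dualMultiplier Q k₀ U =
    Q ^ (k₀ - finrank F U) - 1 - ∑ X ∈ univ with U < X, dualMultiplier Q k₀ X := by
  rw [dualMultiplier, sum_subtype (p := (U < ·)) _ (by simp)]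

theorem sum_dualMultiplier (U : Submodule F V) :
    ∑ X ∈ univ with U ≤ X, dualMultiplier Q k₀ X = Q ^ (k₀ - finrank F U) - 1 := by
  rw [sum_filter_le_eq_add, dualMultiplier_eq]
  ring

theorem dualMultiplier_eq_zero {U : Submodule F V} (hU : k₀ ≤ finrank F U) :
    dualMultiplier Q k₀ U = 0 := by
  induction U using WellFoundedGT.induction with
  | ind U ih =>
    rw [dualMultiplier_eq, Nat.sub_eq_zero_of_le hU, sum_eq_zero fun X hX =>
      ih X (mem_filter.1 hX).2 (hU.trans (finrank_lt_finrank_of_lt (mem_filter.1 hX).2).le)]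
    simp

theorem sum_filter_lt_le_sum_sup_span {U : Submodule F V} {f : Submodule F V → ℝ}
    (hf : ∀ X, U < X → 0 ≤ f X) :
    ∑ X ∈ univ with U < X, f X ≤
      ∑ w ∈ univ with w ∉ U, ∑ X ∈ univ with U ⊔ span F {w} ≤ X, f X := by
  calc ∑ X ∈ univ with U < X, f X
      ≤ ∑ X ∈ univ with U < X, ∑ w ∈ univ with w ∈ X ∧ w ∉ U, f X := by
        refine sum_le_sum fun X hX => ?_
        obtain ⟨w, hwX, hwU⟩ := SetLike.exists_of_lt (mem_filter.1 hX).2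
        exact single_le_sum (f := fun _ => f X) (fun _ _ => hf X (mem_filter.1 hX).2)
          (mem_filter.2 ⟨mem_univ w, hwX, hwU⟩)
    _ = _ := sum_comm' fun X w => by
        simp only [mem_filter, mem_univ, true_and, sup_le_iff, span_singleton_le_iff_mem]
        constructor
        · rintro ⟨hUX, hwX, hwU⟩
          exact ⟨⟨hUX.le, hwX⟩, hwU⟩
        · rintro ⟨⟨hUX, hwX⟩, hwU⟩
          exact ⟨lt_of_le_of_ne hUX (by rintro rfl; exact hwU hwX), hwX, hwU⟩

theorem card_filter_notMem_le (U : Submodule F V) :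
    (#{w | w ∉ U} : ℝ) ≤ Fintype.card V - 1 := by
  have h : #{w | w ∉ U} < Fintype.card V :=
    card_lt_card (filter_ssubset.2 ⟨0, mem_univ 0, not_not.2 U.zero_mem⟩)
  rw [le_sub_iff_add_le]
  exact_mod_cast h

theorem dualMultiplier_pos (hQ : (Fintype.card V : ℝ) ≤ Q) (hk₀ : k₀ ≤ finrank F V)
    {U : Submodule F V} (hU : finrank F U < k₀) : 0 < dualMultiplier Q k₀ U := by
  induction U using WellFoundedGT.induction with
  | ind U ih =>
  have hnonneg : ∀ X, U < X → 0 ≤ dualMultiplier Q k₀ X := fun X hX => by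
    by_cases hX' : finrank F X < k₀
    · exact (ih X hX hX').le
    · exact (dualMultiplier_eq_zero (not_lt.1 hX')).ge
  have : Nontrivial V := nontrivial_of_finrank_pos (R := F) (by omega)
  have hQ2 : 2 ≤ Q := le_trans (by exact_mod_cast Fintype.one_lt_card) hQ
  set t := k₀ - finrank F U - 1
  have hcover : ∀ w ∈ ({w | w ∉ U} : Finset V),
      ∑ X ∈ univ with U ⊔ span F {w} ≤ X, dualMultiplier Q k₀ X = Q ^ t - 1 := fun w hw => by
    rw [sum_dualMultiplier, finrank_sup_span_singleton (mem_filter.1 hw).2, Nat.sub_add_eq]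
  have hbound : ∑ X ∈ univ with U < X, dualMultiplier Q k₀ X ≤ (Q - 1) * (Q ^ t - 1) :=
    calc _ ≤ ∑ w ∈ univ with w ∉ U, ∑ X ∈ univ with U ⊔ span F {w} ≤ X, dualMultiplier Q k₀ X :=
          sum_filter_lt_le_sum_sup_span hnonneg
      _ = #{w | w ∉ U} * (Q ^ t - 1) := by rw [sum_congr rfl hcover, sum_const, nsmul_eq_mul]
      _ ≤ (Q - 1) * (Q ^ t - 1) := mul_le_mul_of_nonneg_right
          (by linarith [card_filter_notMem_le U]) (sub_nonneg.2 (one_le_pow₀ (by linarith)))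
  have hQt : Q ^ (k₀ - finrank F U) = Q * Q ^ t := by
    rw [← pow_succ']
    congr 1
    omega
  rw [dualMultiplier_eq, hQt]
  nlinarith [one_le_pow₀ (M₀ := ℝ) (n := t) (by linarith : 1 ≤ Q)]

theorem dualMultiplier_nonneg (hQ : (Fintype.card V : ℝ) ≤ Q) (hk₀ : k₀ ≤ finrank F V)
    (U : Submodule F V) : 0 ≤ dualMultiplier Q k₀ U := by
  rcases lt_or_ge (finrank F U) k₀ with hU | hU
  · exact (dualMultiplier_pos hQ hk₀ hU).le
  · exact (dualMultiplier_eq_zero hU).ge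

theorem sum_dualMultiplier_mul_sum_filter_le {p : Submodule F V → ℝ} (hsum : ∑ S, p S = 1)
    (hp : ∀ S : Submodule F V, k₀ < finrank F S → p S = 0) :
    ∑ U, dualMultiplier Q k₀ U * ∑ S ∈ univ with S ≤ U, Q ^ finrank F S * p S =
      Q ^ k₀ - ∑ S : Submodule F V, Q ^ finrank F S * p S := by
  calc _ = ∑ S : Submodule F V, ∑ U ∈ univ with S ≤ U,
        Q ^ finrank F S * p S * dualMultiplier Q k₀ U := by
        simp_rw [mul_sum]
        exact (sum_comm' (by simp)).trans
          (sum_congr rfl fun S _ => sum_congr rfl fun U _ => mul_comm _ _)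
    _ = ∑ S : Submodule F V, Q ^ finrank F S * p S * (Q ^ (k₀ - finrank F S) - 1) := by
        simp_rw [← mul_sum, sum_dualMultiplier]
    _ = ∑ S : Submodule F V, (Q ^ k₀ * p S - Q ^ finrank F S * p S) :=
        sum_congr rfl fun S _ => by
          rcases le_or_gt (finrank F S) k₀ with h | h
          · linear_combination p S * pow_mul_pow_sub Q h
          · simp [hp S h]
    _ = _ := by rw [sum_sub_distrib, ← mul_sum, hsum, mul_one]

/-- Complementary slackness: an optimal `p` makes every Fourier constraint below `k₀` tight,
since its dual multiplier is positive; tightness propagates down to `p` itself. -/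
theorem eq_zero_of_finrank_lt_of_pow_le_sum (hQ : (Fintype.card V : ℝ) ≤ Q)
    (hk₀ : k₀ ≤ finrank F V)
    {p : Submodule F V → ℝ} (hsum : ∑ S, p S = 1)
    (hp : ∀ S : Submodule F V, k₀ < finrank F S → p S = 0)
    (hfourier : ∀ U : Submodule F V, 0 ≤ ∑ S ∈ univ with S ≤ U, Q ^ finrank F S * p S)
    (hopt : Q ^ k₀ ≤ ∑ S : Submodule F V, Q ^ finrank F S * p S) {S : Submodule F V}
    (hS : finrank F S < k₀) : p S = 0 := by
  have hterm : ∀ U ∈ univ,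
      0 ≤ dualMultiplier Q k₀ U * ∑ S ∈ univ with S ≤ U, Q ^ finrank F S * p S :=
    fun U _ => mul_nonneg (dualMultiplier_nonneg hQ hk₀ U) (hfourier U)
  have hdual : ∑ U, dualMultiplier Q k₀ U * ∑ S ∈ univ with S ≤ U, Q ^ finrank F S * p S = 0 :=
    le_antisymm (by rw [sum_dualMultiplier_mul_sum_filter_le hsum hp]; linarith) (sum_nonneg hterm)
  have htight : ∀ U : Submodule F V, finrank F U < k₀ →
      ∑ S ∈ univ with S ≤ U, Q ^ finrank F S * p S = 0 := fun U hU =>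
    (mul_eq_zero.1 ((sum_eq_zero_iff_of_nonneg hterm).1 hdual U (mem_univ U))).resolve_left
      (dualMultiplier_pos hQ hk₀ hU).ne'
  have hQ0 : Q ≠ 0 := (lt_of_lt_of_le (by exact_mod_cast Fintype.card_pos) hQ).ne'
  have hlower : IsLowerSet {S : Submodule F V | finrank F S < k₀} :=
    fun _ _ hle h => (finrank_mono hle).trans_lt h
  exact (mul_eq_zero.1 (eq_zero_of_sum_filter_le_eq_zero hlower htight S hS)).resolve_left
    (pow_ne_zero _ hQ0)

end Submodule

section PseudoprobabilityProgram

open Submodule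

theorem exists_minDistGe_finrank_eq_kzero (n d : ℕ) (F : Type) [Field F] [Fintype F] :
    ∃ C : Submodule F (Fin n → F), MinDistGe n d F C ∧ finrank F C = kzero n d F := by
  have hmem : kzero n d F ∈
      {k | ∃ C : Submodule F (Fin n → F), MinDistGe n d F C ∧ finrank F C = k} :=
    Nat.sSup_mem ⟨0, ⊥, fun _ hw hw0 => absurd ((mem_bot F).1 hw) hw0, finrank_bot F _⟩
      ⟨n, fun _ ⟨C, _, hC⟩ => hC ▸ by simpa using C.finrank_le⟩
  exact hmem

theorem kzero_le (n d : ℕ) (F : Type) [Field F] [Fintype F] : kzero n d F ≤ n := by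
  obtain ⟨C, -, hC⟩ := exists_minDistGe_finrank_eq_kzero n d F
  simpa [hC] using C.finrank_le

theorem card_pow_eq_pow_finrank {F V : Type*} [Field F] [Fintype F] [AddCommGroup V]
    [Module F V] [Fintype V] (ℓ : ℕ) (S : Submodule F V) :
    (Fintype.card S : ℝ) ^ ℓ = ((Fintype.card F : ℝ) ^ ℓ) ^ finrank F S := by
  rw [card_eq_pow_finrank (K := F) (V := S)]
  push_cast
  ring

variable {n ℓ d : ℕ} {F : Type} [Field F] [Fintype F]

theorem pseudoFeasibleDim_single {C : Submodule F (Fin n → F)} (hC : finrank F C ≤ kzero n d F) :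
    PseudoFeasibleDim n ℓ d F (Pi.single C 1) := by
  have hnonneg : ∀ S, 0 ≤ (Pi.single C 1 : Submodule F (Fin n → F) → ℝ) S := fun S => by
    rw [Pi.single_apply]
    split_ifs <;> norm_num
  refine ⟨by simp, fun S hS => Pi.single_eq_of_ne (by rintro rfl; omega) _,
    fun U => sum_nonneg fun S _ => ?_, fun U => sum_nonneg fun S _ => ?_⟩
  · split_ifs
    · exact mul_nonneg (by positivity) (hnonneg S)
    · exact le_rfl
  · split_ifs
    · exact hnonneg S
    · exact le_rfl

theorem PseudoFeasibleDim.nonneg_of_kzero_le {p : Submodule F (Fin n → F) → ℝ}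
    (h : PseudoFeasibleDim n ℓ d F p) {S : Submodule F (Fin n → F)}
    (hS : kzero n d F ≤ finrank F S) : 0 ≤ p S := by
  have hup := h.2.2.2 S
  rwa [← sum_filter, sum_filter_le_eq_add, sum_eq_zero fun T hT =>
    h.2.1 T (hS.trans_lt (finrank_lt_finrank_of_lt (mem_filter.1 hT).2)), add_zero] at hup

end PseudoprobabilityProgram

theorem optimum_solutions_integral_general
    (n ℓ d : ℕ) (hnl : n ≤ ℓ)
    (F : Type) [Field F] [Fintype F]
    (p : Submodule F (Fin n → F) → ℝ)
    (hfeas : PseudoFeasibleDim n ℓ d F p)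
    (hopt : ∀ p' : Submodule F (Fin n → F) → ℝ, PseudoFeasibleDim n ℓ d F p' →
      (∑ S : Submodule F (Fin n → F), (Fintype.card S : ℝ) ^ ℓ * p' S)
        ≤ ∑ S : Submodule F (Fin n → F), (Fintype.card S : ℝ) ^ ℓ * p S) :
    (∀ S : Submodule F (Fin n → F), 0 ≤ p S) ∧
    (∑ S : Submodule F (Fin n → F), p S) = 1 ∧
    (∀ S : Submodule F (Fin n → F), Module.finrank F S ≠ kzero n d F → p S = 0) := by
  obtain ⟨C, -, hC⟩ := exists_minDistGe_finrank_eq_kzero n d F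
  have ⟨hsum, hdim, hfourier, _⟩ := hfeas
  simp only [card_pow_eq_pow_finrank, ← sum_filter] at hfourier hopt
  have hQ : (Fintype.card (Fin n → F) : ℝ) ≤ (Fintype.card F : ℝ) ^ ℓ := by
    rw [Fintype.card_fun, Fintype.card_fin]
    push_cast
    exact pow_le_pow_right₀ (by exact_mod_cast Fintype.card_pos) hnl
  have hval := hopt _ (pseudoFeasibleDim_single hC.le)
  simp only [Pi.single_apply, mul_ite, mul_one, mul_zero, sum_ite_eq', mem_univ, if_true,
    hC] at hval
  have hlow : ∀ S : Submodule F (Fin n → F), finrank F S < kzero n d F → p S = 0 :=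
    fun S => Submodule.eq_zero_of_finrank_lt_of_pow_le_sum hQ (by simpa using kzero_le n d F)
      hsum hdim hfourier hval
  refine ⟨fun S => ?_, hsum, fun S hS => ?_⟩
  · rcases lt_or_ge (finrank F S) (kzero n d F) with h | h
    · exact (hlow S h).ge
    · exact hfeas.nonneg_of_kzero_le h
  · rcases hS.lt_or_gt with h | h
    · exact hlow S h
    · exact hdim S h

/-- **Optimum solutions are integral (Theorem 3.6, structure of optima).**
For `ℓ ≥ n`, any maximizer of `∑_S |S|^ℓ p S` over the dimension-constrained
pseudoprobability program is a probability distribution supported on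
subspaces of dimension exactly `k₀`. -/
theorem optimum_solutions_integral
    (n ℓ d : ℕ) (hn : 1 ≤ n) (hd : 1 ≤ d) (hdn : d ≤ n) (hnl : n ≤ ℓ)
    (F : Type) [Field F] [Fintype F]
    (p : Submodule F (Fin n → F) → ℝ)
    (hfeas : PseudoFeasibleDim n ℓ d F p)
    (hopt : ∀ p' : Submodule F (Fin n → F) → ℝ, PseudoFeasibleDim n ℓ d F p' →
      (∑ S : Submodule F (Fin n → F), (Fintype.card S : ℝ) ^ ℓ * p' S)
        ≤ ∑ S : Submodule F (Fin n → F), (Fintype.card S : ℝ) ^ ℓ * p S) :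
    (∀ S : Submodule F (Fin n → F), 0 ≤ p S) ∧
    (∑ S : Submodule F (Fin n → F), p S) = 1 ∧
    (∀ S : Submodule F (Fin n → F), Module.finrank F S ≠ kzero n d F → p S = 0) :=
  optimum_solutions_integral_general n ℓ d hnl F p hfeas hopt
end
end

section
/- Positivity at minimal support dimension: let p be a function from the subspaces of F^n to ℝ satisfying the Fourier constraints at level ℓ, i.e., ∑_{S : S ≤ U} |S|^ℓ · p(S) ≥ 0 for every subspace U of F^n. If S₀ is a subspace with p(S₀) ≠ 0 such that dim S₀ ≤ dim T for every subspace T with p(T) ≠ 0, then p(S₀) > 0. -/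
open Classical

theorem Submodule.sum_ite_le_eq_of_finrank_le_of_ne_zero {K V M : Type*} [DivisionRing K]
    [AddCommGroup V] [Module K V] [FiniteDimensional K V] [Fintype (Submodule K V)]
    [AddCommMonoid M] (f : Submodule K V → M) (S₀ : Submodule K V)
    [DecidablePred (· ≤ S₀)]
    (hmin : ∀ T, f T ≠ 0 → Module.finrank K S₀ ≤ Module.finrank K T) :
    ∑ S, (if S ≤ S₀ then f S else 0) = f S₀ := by
  rw [Finset.sum_ite, Finset.sum_const_zero, add_zero]
  refine Finset.sum_eq_single_of_mem S₀ (by simp) fun S hS hne => ?_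
  by_contra hfS
  exact hne (Submodule.eq_of_le_of_finrank_le (Finset.mem_filter.mp hS).2 (hmin S hfS))

theorem positivity_at_minimal_support_dimension_general
    (n ℓ : ℕ) (F : Type) [Field F] [Fintype F]
    (p : Submodule F (Fin n → F) → ℝ)
    (hFourier : ∀ U : Submodule F (Fin n → F),
      0 ≤ ∑ S : Submodule F (Fin n → F),
        if S ≤ U then (Fintype.card S : ℝ) ^ ℓ * p S else 0)
    (S₀ : Submodule F (Fin n → F)) (hS₀ : p S₀ ≠ 0)
    (hmin : ∀ T : Submodule F (Fin n → F), p T ≠ 0 →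
      Module.finrank F S₀ ≤ Module.finrank F T) :
    0 < p S₀ := by
  have hsum := Submodule.sum_ite_le_eq_of_finrank_le_of_ne_zero
    (fun S : Submodule F (Fin n → F) => (Fintype.card S : ℝ) ^ ℓ * p S) S₀
    fun T hT => hmin T (right_ne_zero_of_mul hT)
  have hpos : 0 ≤ (Fintype.card S₀ : ℝ) ^ ℓ * p S₀ := hsum ▸ hFourier S₀
  exact (nonneg_of_mul_nonneg_right hpos (by positivity)).lt_of_ne' hS₀

/-- **Positivity at minimal support dimension.** If `p` satisfies the Fourier
constraints at level `ℓ` (i.e. `∑_{S ≤ U} |S|^ℓ p S ≥ 0` for every subspace `U`)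
and `S₀` is a subspace of minimal dimension among those with `p ≠ 0`, then
`p S₀ > 0`. -/
theorem positivity_at_minimal_support_dimension
    (n ℓ : ℕ) (hn : 1 ≤ n) (F : Type) [Field F] [Fintype F]
    (p : Submodule F (Fin n → F) → ℝ)
    (hFourier : ∀ U : Submodule F (Fin n → F),
      0 ≤ ∑ S : Submodule F (Fin n → F),
        if S ≤ U then (Fintype.card S : ℝ) ^ ℓ * p S else 0)
    (S₀ : Submodule F (Fin n → F)) (hS₀ : p S₀ ≠ 0)
    (hmin : ∀ T : Submodule F (Fin n → F), p T ≠ 0 →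
      Module.finrank F S₀ ≤ Module.finrank F T) :
    0 < p S₀ :=
  positivity_at_minimal_support_dimension_general n ℓ F p hFourier S₀ hS₀ hmin
end

section
/- Any non-integral solution eventually violates a Fourier constraint (Proposition 5.2): let p be a function from the subspaces of F^n to ℝ such that p(S) < 0 for some subspace S, and let U be a subspace with p(U) < 0 whose dimension is maximal among subspaces with negative p-value. Then there exists L ∈ ℕ such that for every ℓ' ≥ L one has ∑_{S : S ≤ U} |S|^{ℓ'} · p(S) < 0. In particular, for every ℓ ∈ ℕ there exists ℓ' ≥ ℓ at which p violates the level-ℓ' Fourier constraint at U. -/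
/-!
Every proper subspace of `U` has strictly fewer elements than `U`, so after dividing by
`|U| ^ ℓ'` the Fourier sum at `U` tends to `p U < 0` as `ℓ' → ∞`.
-/

open Classical Filter Topology

theorem eventually_sum_pow_mul_neg_of_dominant {ι : Type*} (s : Finset ι) (w c : ι → ℝ)
    {i₀ : ι} (hi₀ : i₀ ∈ s) (hw₀ : 0 < w i₀) (hdom : ∀ i ∈ s, i ≠ i₀ → |w i| < w i₀)
    (hc : c i₀ < 0) :
    ∀ᶠ ℓ in atTop, ∑ i ∈ s, w i ^ ℓ * c i < 0 := by
  have hlim : Tendsto (fun ℓ : ℕ => ∑ i ∈ s, (w i / w i₀) ^ ℓ * c i) atTop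
      (𝓝 (∑ i ∈ s, if i = i₀ then c i else 0)) := by
    refine tendsto_finsetSum s fun i hi => ?_
    by_cases h : i = i₀
    · subst h
      simp [div_self hw₀.ne']
    · have hr : |w i / w i₀| < 1 := by
        rw [abs_div, abs_of_pos hw₀, div_lt_one hw₀]
        exact hdom i hi h
      simpa [h] using (tendsto_pow_atTop_nhds_zero_of_abs_lt_one hr).mul_const (c i)
  rw [Finset.sum_ite_eq' s i₀, if_pos hi₀] at hlim
  filter_upwards [hlim.eventually_lt_const hc] with ℓ hℓ
  have hscale : ∑ i ∈ s, w i ^ ℓ * c i = w i₀ ^ ℓ * ∑ i ∈ s, (w i / w i₀) ^ ℓ * c i := by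
    rw [Finset.mul_sum]
    refine Finset.sum_congr rfl fun i _ => ?_
    rw [div_pow, ← mul_assoc, mul_div_cancel₀ _ (pow_pos hw₀ ℓ).ne']
  rw [hscale]
  exact mul_neg_of_pos_of_neg (pow_pos hw₀ ℓ) hℓ

theorem Submodule.card_lt_card_of_lt {R M : Type*} [Semiring R] [AddCommMonoid M] [Module R M]
    {S T : Submodule R M} [Fintype S] [Fintype T] (h : S < T) :
    Fintype.card S < Fintype.card T :=
  Set.card_lt_card (SetLike.coe_ssubset_coe.2 h)

theorem noninteg_eventually_infeasible_general
    (n : ℕ) (F : Type) [Field F] [Fintype F]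
    (p : Submodule F (Fin n → F) → ℝ)
    (U : Submodule F (Fin n → F)) (hU : p U < 0) :
    (∃ L : ℕ, ∀ ℓ' : ℕ, L ≤ ℓ' →
      (∑ S : Submodule F (Fin n → F),
        if S ≤ U then (Fintype.card S : ℝ) ^ ℓ' * p S else 0) < 0) ∧
    (∀ ℓ : ℕ, ∃ ℓ' : ℕ, ℓ ≤ ℓ' ∧
      (∑ S : Submodule F (Fin n → F),
        if S ≤ U then (Fintype.card S : ℝ) ^ ℓ' * p S else 0) < 0) := by
  have hev : ∀ᶠ ℓ' in atTop, (∑ S : Submodule F (Fin n → F),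
      if S ≤ U then (Fintype.card S : ℝ) ^ ℓ' * p S else 0) < 0 := by
    simp only [← Finset.sum_filter]
    refine eventually_sum_pow_mul_neg_of_dominant _
      (fun S : Submodule F (Fin n → F) => (Fintype.card S : ℝ)) p (by simp)
      (by simp [Fintype.card_pos]) (fun S hS hne => ?_) hU
    have hlt : S < U := lt_of_le_of_ne (Finset.mem_filter.1 hS).2 hne
    rw [abs_of_nonneg (Nat.cast_nonneg _)]
    exact_mod_cast Submodule.card_lt_card_of_lt hlt
  exact ⟨eventually_atTop.1 hev, frequently_atTop.1 hev.frequently⟩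

/-- **Any non-integral solution eventually violates a Fourier constraint
(Proposition 5.2).** If `p U < 0` and `U` has maximal dimension among subspaces
with negative `p`-value, then for all sufficiently large `ℓ'` the level-`ℓ'`
Fourier constraint at `U` is violated; in particular for every `ℓ` there is
some `ℓ' ≥ ℓ` at which `p` violates the level-`ℓ'` Fourier constraint at `U`. -/
theorem noninteg_eventually_infeasible
    (n : ℕ) (hn : 1 ≤ n) (F : Type) [Field F] [Fintype F]
    (p : Submodule F (Fin n → F) → ℝ)
    (U : Submodule F (Fin n → F)) (hU : p U < 0)
    (hmax : ∀ T : Submodule F (Fin n → F), p T < 0 →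
      Module.finrank F T ≤ Module.finrank F U) :
    (∃ L : ℕ, ∀ ℓ' : ℕ, L ≤ ℓ' →
      (∑ S : Submodule F (Fin n → F),
        if S ≤ U then (Fintype.card S : ℝ) ^ ℓ' * p S else 0) < 0) ∧
    (∀ ℓ : ℕ, ∃ ℓ' : ℕ, ℓ ≤ ℓ' ∧
      (∑ S : Submodule F (Fin n → F),
        if S ≤ U then (Fintype.card S : ℝ) ^ ℓ' * p S else 0) < 0) :=
  noninteg_eventually_infeasible_general n F p U hU
end

section
/- Feasibility of true solutions: let C be a subspace of F^n and define a^C : (F^n)^ℓ → ℝ by a^C(x) := 1 if Span(x) ≤ C and a^C(x) := 0 otherwise. Then ∑_{x ∈ (F^n)^ℓ} a^C(x) = |C|^ℓ, and a^C is feasible for the unsymmetrized Krawtchouk LP at level ℓ if and only if C has minimum distance at least d. -/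
open Classical

noncomputable section

/-!
`trueSolution C` is the indicator of `C^ℓ` inside `(F^n)^ℓ`, so summing against it is summing
over the group `C^ℓ`. Its Fourier coefficient at `α` is then the sum over `C^ℓ` of the additive
character `x ↦ ψ (∑ j, ⟨α j, x j⟩)`, which is `|C|^ℓ` or `0` by orthogonality; in particular it
is a nonnegative real. The vanishing constraint holds iff no nonzero vector of `C` has weight
below `d`, as the constant tuple `(w, …, w)` spans the line through `w`.
-/

theorem AddChar.exists_nonneg_sum_eq {G : Type*} [AddGroup G] [Fintype G]
    (φ : AddChar G ℂ) : ∃ c : ℝ, 0 ≤ c ∧ ∑ g, φ g = c := by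
  rw [AddChar.sum_eq_ite]
  split_ifs
  · exact ⟨Fintype.card G, by positivity, by push_cast; rfl⟩
  · exact ⟨0, le_rfl, by simp⟩

theorem Submodule.span_range_le_iff {R V ι : Type*} [Semiring R] [AddCommMonoid V] [Module R V]
    (C : Submodule R V) (x : ι → V) :
    Submodule.span R (Set.range x) ≤ C ↔ ∀ j, x j ∈ C := by
  rw [Submodule.span_le, Set.range_subset_iff]
  rfl

section TrueSolution

variable {R V ι : Type*} [Semiring R] [AddCommMonoid V] [Module R V]

def trueSolution (C : Submodule R V) (x : ι → V) : ℝ :=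
  if Submodule.span R (Set.range x) ≤ C then 1 else 0

variable (C : Submodule R V)

theorem trueSolution_nonneg (x : ι → V) : 0 ≤ trueSolution C x := by
  unfold trueSolution
  split_ifs <;> norm_num

theorem trueSolution_eq_one_of_forall_mem {x : ι → V} (hx : ∀ j, x j ∈ C) :
    trueSolution C x = 1 :=
  if_pos ((Submodule.span_range_le_iff C x).2 hx)

theorem trueSolution_zero : trueSolution C (0 : ι → V) = 1 :=
  trueSolution_eq_one_of_forall_mem C fun _ => C.zero_mem

theorem trueSolution_eq_zero_of_not_le {x : ι → V}
    (hx : ¬ Submodule.span R (Set.range x) ≤ C) : trueSolution C x = 0 :=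
  if_neg hx

variable [Fintype ι] [DecidableEq ι] [Fintype V]

theorem sum_trueSolution_smul {M : Type*} [AddCommMonoid M] [Module ℝ M] (f : (ι → V) → M) :
    ∑ x, trueSolution C x • f x = ∑ y : ι → C, f (fun j => y j) := by
  refine (Fintype.sum_of_injective (fun y j => (y j : V)) ?_ _ _ ?_ ?_).symm
  · exact fun y y' h => funext fun j => Subtype.ext (congrFun h j)
  · intro x hx
    rw [trueSolution_eq_zero_of_not_le, zero_smul]
    rw [Submodule.span_range_le_iff]
    exact fun hC => hx ⟨fun j => ⟨x j, hC j⟩, rfl⟩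
  · intro y
    rw [trueSolution_eq_one_of_forall_mem C fun j => (y j).2, one_smul]

theorem sum_trueSolution :
    ∑ x : ι → V, trueSolution C x = (Fintype.card C : ℝ) ^ Fintype.card ι := by
  simpa using sum_trueSolution_smul C fun _ => (1 : ℝ)

end TrueSolution

section KrawtchoukLP

variable {n ℓ d : ℕ} {F : Type} [Field F] [Fintype F] (ψ : AddChar F ℂ)
  (C : Submodule F (Fin n → F))

theorem exists_nonneg_sum_trueSolution_mul_chi (α : Fin ℓ → Fin n → F) :
    ∃ c : ℝ, 0 ≤ c ∧ ∑ x, (trueSolution C x : ℂ) * chi ψ α x = c := by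
  let pairing : (Fin ℓ → C) →+ F :=
    { toFun := fun y => ∑ j, ∑ i, α j i * (y j : Fin n → F) i
      map_zero' := by simp
      map_add' := fun y y' => by simp [mul_add, Finset.sum_add_distrib] }
  have hsum :
      ∑ x, (trueSolution C x : ℂ) * chi ψ α x = ∑ y, ψ.compAddMonoidHom pairing y := by
    have h := sum_trueSolution_smul C (chi ψ α)
    simp only [Complex.real_smul] at h
    exact h
  rw [hsum]
  exact (ψ.compAddMonoidHom pairing).exists_nonneg_sum_eq

theorem krawFeasible_trueSolution (hmin : ∀ w ∈ C, w ≠ 0 → d ≤ hammingNorm w) :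
    KrawFeasible n ℓ d F ψ (trueSolution C) := by
  refine ⟨trueSolution_zero C, fun x ⟨w, hw, hw0, hwt⟩ => ?_,
    exists_nonneg_sum_trueSolution_mul_chi ψ C, trueSolution_nonneg C⟩
  refine trueSolution_eq_zero_of_not_le C fun hle => ?_
  have hdw := hmin w (hle hw) hw0
  have hw_pos := hammingNorm_pos_iff.2 hw0
  omega

theorem le_hammingNorm_of_krawFeasible_trueSolution (hl : 1 ≤ ℓ)
    (hfeas : KrawFeasible n ℓ d F ψ (trueSolution C)) {w : Fin n → F} (hwC : w ∈ C)
    (hw0 : w ≠ 0) : d ≤ hammingNorm w := by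
  by_contra! hlt
  have hw : w ∈ Submodule.span F (Set.range fun _ : Fin ℓ => w) :=
    Submodule.subset_span ⟨⟨0, hl⟩, rfl⟩
  have hzero := hfeas.2.1 _ ⟨w, hw, hw0, by omega⟩
  rw [trueSolution_eq_one_of_forall_mem C fun _ => hwC] at hzero
  exact one_ne_zero hzero

end KrawtchoukLP

theorem true_solution_feasibility_general
    (n ℓ d : ℕ) (hl : 1 ≤ ℓ)
    (F : Type) [Field F] [Fintype F]
    (ψ : AddChar F ℂ)
    (C : Submodule F (Fin n → F))
    (aC : (Fin ℓ → Fin n → F) → ℝ)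
    (haC : ∀ x : Fin ℓ → Fin n → F,
      aC x = if Submodule.span F (Set.range x) ≤ C then 1 else 0) :
    (∑ x : Fin ℓ → Fin n → F, aC x) = (Fintype.card C : ℝ) ^ ℓ ∧
    (KrawFeasible n ℓ d F ψ aC ↔ ∀ w ∈ C, w ≠ 0 → d ≤ hammingNorm w) := by
  obtain rfl : aC = trueSolution C := funext haC
  refine ⟨?_, fun hfeas w hwC hw0 => ?_, krawFeasible_trueSolution ψ C⟩
  · simpa using sum_trueSolution C (ι := Fin ℓ)
  · exact le_hammingNorm_of_krawFeasible_trueSolution ψ C hl hfeas hwC hw0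

/-- **Feasibility of true solutions.** For a subspace `C ≤ F^n`, the true
solution `a^C(x) := 1[Span(x) ≤ C]` has total sum `|C|^ℓ`, and it is feasible
for the unsymmetrized Krawtchouk LP at level `ℓ` iff `C` has minimum distance
at least `d`. -/
theorem true_solution_feasibility
    (n ℓ d : ℕ) (hn : 1 ≤ n) (hl : 1 ≤ ℓ) (hd : 1 ≤ d) (hdn : d ≤ n)
    (F : Type) [Field F] [Fintype F]
    (ψ : AddChar F ℂ) (hψ : ψ ≠ 1)
    (C : Submodule F (Fin n → F))
    (aC : (Fin ℓ → Fin n → F) → ℝ)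
    (haC : ∀ x : Fin ℓ → Fin n → F,
      aC x = if Submodule.span F (Set.range x) ≤ C then 1 else 0) :
    (∑ x : Fin ℓ → Fin n → F, aC x) = (Fintype.card C : ℝ) ^ ℓ ∧
    (KrawFeasible n ℓ d F ψ aC ↔ ∀ w ∈ C, w ≠ 0 → d ≤ hammingNorm w) :=
  true_solution_feasibility_general n ℓ d hl F ψ C aC haC
end
end
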